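/- arXiv:2304.04221 — 7 statements merged into one kernel-verified Lean document; each statement's English description precedes it below -/
import Mathlib

section
/- Let X be a p-dimensional random row vector and Y a square-integrable real random variable with positive variance, with Σ_XX positive definite and Σ_XY ≠ 0, and set γ = √(Σ_YX Σ_XX⁻¹ Σ_XY)/σ_Y. Then for every intercept α ∈ ℝ and coefficient vector β ∈ ℝ^p, the concordance correlation coefficient of Y with the linear predictor α + X·β satisfies CCC(Y, α + X·β) ≤ γ. -/
/-!
With `V = α + X·β` one has `Cov(Y, V) = Σ_YX β` and `Var V = βᵀ Σ_XX β`, so the Cauchy–Schwarz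
inequality for the inner product defined by `Σ_XX`, applied to `Σ_XX⁻¹ Σ_XY` and `β`, gives
`Cov(Y, V)² ≤ γ² σ_Y² Var V`. Hence `2 Cov(Y, V) ≤ 2 γ σ_Y √(Var V) ≤ γ (σ_Y² + Var V)` by AM–GM,
and the mean term in the denominator of the CCC only makes it larger.
-/

open MeasureTheory ProbabilityTheory Matrix

/-- Expectation of a real random variable with respect to the ambient measure. -/
noncomputable def pMean {Ω : Type*} [MeasureSpace Ω] (U : Ω → ℝ) : ℝ := ∫ ω, U ω

/-- Covariance of two real random variables. -/
noncomputable def pCov {Ω : Type*} [MeasureSpace Ω] (U V : Ω → ℝ) : ℝ :=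
  ∫ ω, (U ω - pMean U) * (V ω - pMean V)

/-- Variance of a real random variable. -/
noncomputable def pVar {Ω : Type*} [MeasureSpace Ω] (U : Ω → ℝ) : ℝ := pCov U U

/-- Lin's concordance correlation coefficient. -/
noncomputable def CCC {Ω : Type*} [MeasureSpace Ω] (U V : Ω → ℝ) : ℝ :=
  2 * pCov U V / (pVar U + pVar V + (pMean U - pMean V) ^ 2)

lemma Matrix.PosSemidef.sq_dotProduct_mulVec_le {n : Type*} [Fintype n] {A : Matrix n n ℝ}
    (hA : A.PosSemidef) (x y : n → ℝ) :
    (x ⬝ᵥ (A *ᵥ y)) ^ 2 ≤ (x ⬝ᵥ (A *ᵥ x)) * (y ⬝ᵥ (A *ᵥ y)) := by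
  let _ := A.toSeminormedAddCommGroup hA
  let _ := A.toInnerProductSpace hA
  have h := real_inner_mul_inner_self_le x y
  change (A *ᵥ y) ⬝ᵥ star x * ((A *ᵥ y) ⬝ᵥ star x)
    ≤ (A *ᵥ x) ⬝ᵥ star x * ((A *ᵥ y) ⬝ᵥ star y) at h
  simpa only [star_trivial, dotProduct_comm (A *ᵥ _), sq] using h

lemma Matrix.PosDef.sq_dotProduct_le {n : Type*} [Fintype n] [DecidableEq n] {A : Matrix n n ℝ}
    (hA : A.PosDef) (u v : n → ℝ) :
    (u ⬝ᵥ v) ^ 2 ≤ (u ⬝ᵥ (A⁻¹ *ᵥ u)) * (v ⬝ᵥ (A *ᵥ v)) := by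
  have hA_inv : A *ᵥ (A⁻¹ *ᵥ u) = u := by
    rw [mulVec_mulVec, mul_nonsing_inv A (A.isUnit_iff_isUnit_det.mp hA.isUnit), one_mulVec]
  have hsymm : Aᵀ = A := by simpa using hA.isHermitian.eq
  have := hA.posSemidef.sq_dotProduct_mulVec_le (A⁻¹ *ᵥ u) v
  rwa [dotProduct_mulVec, ← mulVec_transpose, hsymm, hA_inv, dotProduct_comm (A⁻¹ *ᵥ u)] at this

section
variable {Ω ι : Type*} {mΩ : MeasurableSpace Ω} {μ : Measure Ω} [Fintype ι]

lemma covariance_dotProduct_left [IsFiniteMeasure μ] {X : Ω → ι → ℝ} {Y : Ω → ℝ}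
    (hX : ∀ i, MemLp (fun ω => X ω i) 2 μ) (hY : MemLp Y 2 μ) (β : ι → ℝ) :
    cov[fun ω => X ω ⬝ᵥ β, Y; μ] = (fun i => cov[fun ω => X ω i, Y; μ]) ⬝ᵥ β := by
  simp only [dotProduct]
  rw [covariance_fun_sum_left (fun i => (hX i).mul_const (β i)) hY]
  simp only [covariance_mul_const_left]

lemma covariance_dotProduct_dotProduct [IsFiniteMeasure μ] {X : Ω → ι → ℝ}
    (hX : ∀ i, MemLp (fun ω => X ω i) 2 μ) (β γ : ι → ℝ) :
    cov[fun ω => X ω ⬝ᵥ β, fun ω => X ω ⬝ᵥ γ; μ] =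
      β ⬝ᵥ (Matrix.of (fun i j => cov[fun ω => X ω i, fun ω => X ω j; μ]) *ᵥ γ) := by
  simp only [dotProduct]
  rw [covariance_fun_sum_fun_sum (fun i => (hX i).mul_const (β i))
    (fun i => (hX i).mul_const (γ i))]
  simp only [covariance_mul_const_left, covariance_mul_const_right, mulVec, dotProduct, of_apply,
    Finset.mul_sum]
  exact Finset.sum_congr rfl fun i _ => Finset.sum_congr rfl fun j _ => by ring
end

lemma two_mul_div_le_sqrt_div_sqrt {s v d c q : ℝ} (hs : 0 < s) (hv : 0 ≤ v) (hd : 0 ≤ d)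
    (hcq : c ^ 2 ≤ q * v) : 2 * c / (s + v + d) ≤ √q / √s := by
  rcases le_or_gt c 0 with hc | hc
  · exact (div_nonpos_of_nonpos_of_nonneg (by linarith) (by linarith)).trans (by positivity)
  have hc_le : c ≤ √q * √v := by
    rw [← Real.sqrt_mul' q hv, ← Real.sqrt_sq hc.le]
    exact Real.sqrt_le_sqrt hcq
  have hamgm : 2 * √s * √v ≤ s + v := by
    nlinarith [sq_nonneg (√s - √v), Real.sq_sqrt hs.le, Real.sq_sqrt hv]
  rw [div_le_div_iff₀ (by linarith) (Real.sqrt_pos.mpr hs)]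
  calc 2 * c * √s ≤ 2 * (√q * √v) * √s := by gcongr
    _ = √q * (2 * √s * √v) := by ring
    _ ≤ √q * (s + v + d) := by gcongr; linarith

lemma pCov_eq_covariance {Ω : Type*} [MeasureSpace Ω] (U V : Ω → ℝ) :
    pCov U V = cov[U, V; ℙ] :=
  rfl

lemma pVar_nonneg {Ω : Type*} [MeasureSpace Ω] (U : Ω → ℝ) : 0 ≤ pVar U :=
  integral_nonneg fun _ => mul_self_nonneg _

lemma CCC_le_sqrt_div_sqrt_of_sq_pCov_le {Ω : Type*} [MeasureSpace Ω] {U V : Ω → ℝ} {q : ℝ}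
    (hU : 0 < pVar U) (hcq : pCov U V ^ 2 ≤ q * pVar V) : CCC U V ≤ √q / √(pVar U) :=
  two_mul_div_le_sqrt_div_sqrt hU (pVar_nonneg V) (sq_nonneg _) hcq

theorem ccc_linear_le_gamma_general {Ω : Type*} [MeasureSpace Ω]
    [IsProbabilityMeasure (ℙ : Measure Ω)] {p : ℕ}
    (X : Ω → Fin p → ℝ) (Y : Ω → ℝ)
    (hX : ∀ j, MemLp (fun ω => X ω j) 2 ℙ) (hY : MemLp Y 2 ℙ)
    (hvar : 0 < pVar Y)
    (SigXX : Matrix (Fin p) (Fin p) ℝ)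
    (hSigXX : SigXX = Matrix.of fun j l => pCov (fun ω => X ω j) (fun ω => X ω l))
    (hPD : SigXX.PosDef)
    (SigXY : Fin p → ℝ) (hSigXY : SigXY = fun j => pCov (fun ω => X ω j) Y)
    (γ : ℝ) (hγ : γ = Real.sqrt (SigXY ⬝ᵥ (SigXX⁻¹ *ᵥ SigXY)) / Real.sqrt (pVar Y)) :
    ∀ (α : ℝ) (β : Fin p → ℝ), CCC Y (fun ω => α + X ω ⬝ᵥ β) ≤ γ := by
  intro α β
  set V : Ω → ℝ := fun ω => α + X ω ⬝ᵥ β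
  have hXβ : MemLp (fun ω => X ω ⬝ᵥ β) 2 ℙ :=
    memLp_finsetSum _ fun j _ => (hX j).mul_const (β j)
  have hcovYV : pCov Y V = SigXY ⬝ᵥ β := by
    rw [hSigXY]
    simp only [pCov_eq_covariance]
    rw [covariance_comm, covariance_const_add_left (hXβ.integrable one_le_two),
      covariance_dotProduct_left hX hY]
  have hvarV : pVar V = β ⬝ᵥ (SigXX *ᵥ β) := by
    rw [hSigXX, pVar]
    simp only [pCov_eq_covariance]
    rw [covariance_const_add_left (hXβ.integrable one_le_two),
      covariance_const_add_right (hXβ.integrable one_le_two),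
      covariance_dotProduct_dotProduct hX]
  rw [hγ]
  refine CCC_le_sqrt_div_sqrt_of_sq_pCov_le hvar ?_
  rw [hcovYV, hvarV]
  exact hPD.sq_dotProduct_le SigXY β

/-- For every linear predictor `α + X·β`, the concordance correlation
coefficient with `Y` is at most `γ = √(Σ_YX Σ_XX⁻¹ Σ_XY)/σ_Y`. -/
theorem ccc_linear_le_gamma {Ω : Type*} [MeasureSpace Ω]
    [IsProbabilityMeasure (ℙ : Measure Ω)] {p : ℕ} (hp : 0 < p)
    (X : Ω → Fin p → ℝ) (Y : Ω → ℝ)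
    (hX : ∀ j, MemLp (fun ω => X ω j) 2 ℙ) (hY : MemLp Y 2 ℙ)
    (hvar : 0 < pVar Y)
    (SigXX : Matrix (Fin p) (Fin p) ℝ)
    (hSigXX : SigXX = Matrix.of fun j l => pCov (fun ω => X ω j) (fun ω => X ω l))
    (hPD : SigXX.PosDef)
    (SigXY : Fin p → ℝ) (hSigXY : SigXY = fun j => pCov (fun ω => X ω j) Y)
    (hne : SigXY ≠ 0)
    (γ : ℝ) (hγ : γ = Real.sqrt (SigXY ⬝ᵥ (SigXX⁻¹ *ᵥ SigXY)) / Real.sqrt (pVar Y)) :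
    ∀ (α : ℝ) (β : Fin p → ℝ), CCC Y (fun ω => α + X ω ⬝ᵥ β) ≤ γ :=
  ccc_linear_le_gamma_general X Y hX hY hvar SigXX hSigXX hPD SigXY hSigXY γ hγ
end

section
/- Let X be a p-dimensional random row vector and Y a square-integrable real random variable with positive variance, with Σ_XX positive definite and Σ_XY ≠ 0, and set γ = √(Σ_YX Σ_XX⁻¹ Σ_XY)/σ_Y, β* = (σ_Y/√(Σ_YX Σ_XX⁻¹ Σ_XY))·Σ_XX⁻¹Σ_XY and α* = μ_Y − μ_X·β*. Then the concordance correlation coefficient of Y with the maximum agreement linear predictor α* + X·β* equals γ: CCC(Y, α* + X·β*) = γ. -/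
open MeasureTheory ProbabilityTheory Matrix

/-! The predictor `W = α* + X·β*` has the mean of `Y`, so
`CCC(Y, W) = 2 Cov(Y, W) / (Var Y + Var W)`. Bilinearity of covariance gives
`Cov(Y, W) = Σ_YX β* = σ_Y √q` and `Var W = β*ᵀ Σ_XX β* = σ_Y²`, where
`q = Σ_YX Σ_XX⁻¹ Σ_XY > 0`; hence `CCC(Y, W) = 2 σ_Y √q / (2 σ_Y²) = √q / σ_Y = γ`. -/

section LinearPredictor

variable {Ω ι : Type*} [Fintype ι] {mΩ : MeasurableSpace Ω} {μ : Measure Ω} {X : Ω → ι → ℝ}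

lemma memLp_dotProduct {q : ENNReal} (hX : ∀ j, MemLp (fun ω => X ω j) q μ) (b : ι → ℝ) :
    MemLp (fun ω => X ω ⬝ᵥ b) q μ :=
  memLp_finsetSum _ fun j _ => (hX j).mul_const _

variable [IsProbabilityMeasure μ]

lemma integral_const_add_dotProduct (hX : ∀ j, Integrable (fun ω => X ω j) μ) (a : ℝ)
    (b : ι → ℝ) :
    ∫ ω, a + X ω ⬝ᵥ b ∂μ = a + (fun j => ∫ ω, X ω j ∂μ) ⬝ᵥ b := by
  have hXb : ∀ j ∈ Finset.univ, Integrable (fun ω => X ω j * b j) μ :=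
    fun j _ => (hX j).mul_const _
  simp only [dotProduct]
  rw [integral_add (integrable_const a) (integrable_finsetSum _ hXb), integral_finsetSum _ hXb]
  simp [integral_mul_const]

lemma covariance_const_add_dotProduct_right (hX : ∀ j, MemLp (fun ω => X ω j) 2 μ)
    {Y : Ω → ℝ} (hY : MemLp Y 2 μ) (a : ℝ) (b : ι → ℝ) :
    cov[Y, fun ω => a + X ω ⬝ᵥ b; μ] = (fun j => cov[fun ω => X ω j, Y; μ]) ⬝ᵥ b := by
  have hXb : ∀ j, MemLp (fun ω => X ω j * b j) 2 μ := fun j => (hX j).mul_const _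
  rw [covariance_const_add_right ((memLp_dotProduct hX b).integrable one_le_two)]
  simp only [dotProduct]
  rw [covariance_fun_sum_right hXb hY]
  simp only [covariance_comm Y, covariance_mul_const_left]

lemma covariance_const_add_dotProduct_self (hX : ∀ j, MemLp (fun ω => X ω j) 2 μ)
    (a : ℝ) (b : ι → ℝ) :
    cov[fun ω => a + X ω ⬝ᵥ b, fun ω => a + X ω ⬝ᵥ b; μ] =
      b ⬝ᵥ (Matrix.of (fun j l => cov[fun ω => X ω j, fun ω => X ω l; μ]) *ᵥ b) := by
  have hXb : ∀ j, MemLp (fun ω => X ω j * b j) 2 μ := fun j => (hX j).mul_const _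
  have hint := (memLp_dotProduct hX b).integrable one_le_two
  rw [covariance_const_add_left hint, covariance_const_add_right hint]
  simp only [dotProduct, mulVec, of_apply, Finset.mul_sum]
  rw [covariance_fun_sum_fun_sum hXb hXb]
  simp only [covariance_mul_const_left, covariance_mul_const_right]
  exact Finset.sum_congr rfl fun j _ => Finset.sum_congr rfl fun l _ => by ring

end LinearPredictor

section MalpCoefficient

variable {n : Type*} [Fintype n] [DecidableEq n]

/-- `β*` of the paper, for `S = Σ_XX`, `c = Σ_XY` and `s = σ_Y`. -/
noncomputable def malpCoeff (S : Matrix n n ℝ) (c : n → ℝ) (s : ℝ) : n → ℝ :=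
  (s / √(c ⬝ᵥ (S⁻¹ *ᵥ c))) • (S⁻¹ *ᵥ c)

lemma dotProduct_malpCoeff (S : Matrix n n ℝ) (c : n → ℝ) (s : ℝ) :
    c ⬝ᵥ malpCoeff S c s = s * √(c ⬝ᵥ (S⁻¹ *ᵥ c)) := by
  rw [malpCoeff, dotProduct_smul, smul_eq_mul, div_mul_comm, Real.div_sqrt, mul_comm]

lemma malpCoeff_dotProduct_mulVec_malpCoeff {S : Matrix n n ℝ} (hS : IsUnit S) {c : n → ℝ}
    (hc : 0 < c ⬝ᵥ (S⁻¹ *ᵥ c)) (s : ℝ) :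
    malpCoeff S c s ⬝ᵥ (S *ᵥ malpCoeff S c s) = s ^ 2 := by
  have hSβ : S *ᵥ malpCoeff S c s = (s / √(c ⬝ᵥ (S⁻¹ *ᵥ c))) • c := by
    rw [malpCoeff, mulVec_smul, mulVec_mulVec,
      mul_nonsing_inv _ ((isUnit_iff_isUnit_det S).mp hS), one_mulVec]
  rw [hSβ, dotProduct_smul, dotProduct_comm _ c, dotProduct_malpCoeff, smul_eq_mul]
  field_simp

lemma Matrix.PosDef.dotProduct_inv_mulVec_pos {S : Matrix n n ℝ} (hS : S.PosDef) {c : n → ℝ}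
    (hc : c ≠ 0) : 0 < c ⬝ᵥ (S⁻¹ *ᵥ c) := by
  simpa using hS.inv.dotProduct_mulVec_pos hc

end MalpCoefficient

lemma CCC_of_pMean_eq {Ω : Type*} [MeasureSpace Ω] {U V : Ω → ℝ} (h : pMean U = pMean V) :
    CCC U V = 2 * pCov U V / (pVar U + pVar V) := by
  rw [CCC, h, sub_self, zero_pow two_ne_zero, add_zero]

theorem ccc_malp_eq_gamma_general {Ω : Type*} [MeasureSpace Ω]
    [IsProbabilityMeasure (ℙ : Measure Ω)] {p : ℕ}
    (X : Ω → Fin p → ℝ) (Y : Ω → ℝ)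
    (hX : ∀ j, MemLp (fun ω => X ω j) 2 ℙ) (hY : MemLp Y 2 ℙ)
    (hvar : 0 < pVar Y)
    (μX : Fin p → ℝ) (hμX : μX = fun j => pMean (fun ω => X ω j))
    (μY : ℝ) (hμY : μY = pMean Y)
    (SigXX : Matrix (Fin p) (Fin p) ℝ)
    (hSigXX : SigXX = Matrix.of fun j l => pCov (fun ω => X ω j) (fun ω => X ω l))
    (hPD : SigXX.PosDef)
    (SigXY : Fin p → ℝ) (hSigXY : SigXY = fun j => pCov (fun ω => X ω j) Y)
    (hne : SigXY ≠ 0)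
    (γ : ℝ) (hγ : γ = Real.sqrt (SigXY ⬝ᵥ (SigXX⁻¹ *ᵥ SigXY)) / Real.sqrt (pVar Y))
    (βstar : Fin p → ℝ)
    (hβstar : βstar = (Real.sqrt (pVar Y) / Real.sqrt (SigXY ⬝ᵥ (SigXX⁻¹ *ᵥ SigXY))) •
      (SigXX⁻¹ *ᵥ SigXY))
    (αstar : ℝ) (hαstar : αstar = μY - μX ⬝ᵥ βstar) :
    CCC Y (fun ω => αstar + X ω ⬝ᵥ βstar) = γ := by
  replace hβstar : βstar = malpCoeff SigXX SigXY √(pVar Y) := hβstar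
  have hq := hPD.dotProduct_inv_mulVec_pos hne
  have hmean : pMean (fun ω => αstar + X ω ⬝ᵥ βstar) = pMean Y := by
    rw [pMean, integral_const_add_dotProduct fun j => (hX j).integrable one_le_two,
      hαstar, hμY, hμX]
    exact sub_add_cancel _ _
  have hcov : pCov Y (fun ω => αstar + X ω ⬝ᵥ βstar) =
      √(pVar Y) * √(SigXY ⬝ᵥ (SigXX⁻¹ *ᵥ SigXY)) := by
    rw [pCov_eq_covariance, covariance_const_add_dotProduct_right hX hY]
    simp only [← pCov_eq_covariance, ← hSigXY, hβstar, dotProduct_malpCoeff]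
  have hvarW : pVar (fun ω => αstar + X ω ⬝ᵥ βstar) = pVar Y := by
    rw [pVar, pCov_eq_covariance, covariance_const_add_dotProduct_self hX]
    simp only [← pCov_eq_covariance, ← hSigXX, hβstar]
    rw [malpCoeff_dotProduct_mulVec_malpCoeff hPD.isUnit hq, Real.sq_sqrt hvar.le]
  rw [CCC_of_pMean_eq hmean.symm, hcov, hvarW, hγ]
  field_simp
  rw [Real.sq_sqrt hvar.le]
  ring

/-- The maximum agreement linear predictor `α* + X·β*` attains
concordance correlation coefficient `γ = √(Σ_YX Σ_XX⁻¹ Σ_XY)/σ_Y` with `Y`. -/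
theorem ccc_malp_eq_gamma {Ω : Type*} [MeasureSpace Ω]
    [IsProbabilityMeasure (ℙ : Measure Ω)] {p : ℕ} (hp : 0 < p)
    (X : Ω → Fin p → ℝ) (Y : Ω → ℝ)
    (hX : ∀ j, MemLp (fun ω => X ω j) 2 ℙ) (hY : MemLp Y 2 ℙ)
    (hvar : 0 < pVar Y)
    (μX : Fin p → ℝ) (hμX : μX = fun j => pMean (fun ω => X ω j))
    (μY : ℝ) (hμY : μY = pMean Y)
    (SigXX : Matrix (Fin p) (Fin p) ℝ)
    (hSigXX : SigXX = Matrix.of fun j l => pCov (fun ω => X ω j) (fun ω => X ω l))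
    (hPD : SigXX.PosDef)
    (SigXY : Fin p → ℝ) (hSigXY : SigXY = fun j => pCov (fun ω => X ω j) Y)
    (hne : SigXY ≠ 0)
    (γ : ℝ) (hγ : γ = Real.sqrt (SigXY ⬝ᵥ (SigXX⁻¹ *ᵥ SigXY)) / Real.sqrt (pVar Y))
    (βstar : Fin p → ℝ)
    (hβstar : βstar = (Real.sqrt (pVar Y) / Real.sqrt (SigXY ⬝ᵥ (SigXX⁻¹ *ᵥ SigXY))) •
      (SigXX⁻¹ *ᵥ SigXY))
    (αstar : ℝ) (hαstar : αstar = μY - μX ⬝ᵥ βstar) :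
    CCC Y (fun ω => αstar + X ω ⬝ᵥ βstar) = γ :=
  ccc_malp_eq_gamma_general X Y hX hY hvar μX hμX μY hμY SigXX hSigXX hPD SigXY hSigXY hne γ hγ
    βstar hβstar αstar hαstar
end

section
/- Let Σ_XX be a p×p real positive definite matrix, Σ_XY ∈ ℝ^p a nonzero column vector with Σ_YX = Σ_XYᵀ, σ_Y > 0, and γ = √(Σ_YX Σ_XX⁻¹ Σ_XY)/σ_Y; assume γ ≤ 1. Define, for x₀ ∈ ℝ^p (row vector), σ_MA²(x₀) = σ_Y²(1−γ²)·[ 2/(1+γ) + (1/γ²)(x₀−μ_X)Σ_XX⁻¹(x₀−μ_X)ᵀ − ((1−γ²)/(σ_Y²γ⁴))(Σ_YX Σ_XX⁻¹(x₀−μ_X)ᵀ)² ] and σ_LS²(x₀) = σ_Y²(1−γ²)·[ 1 + (x₀−μ_X)Σ_XX⁻¹(x₀−μ_X)ᵀ ]. Then for every x₀ ∈ ℝ^p and μ_X ∈ ℝ^p, σ_MA²(x₀) ≥ σ_LS²(x₀). -/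
/-!
Cauchy–Schwarz for the inner product induced by `Σ_XX⁻¹` gives
`(Σ_YX Σ_XX⁻¹ vᵀ)² ≤ σ_Y² γ² · v Σ_XX⁻¹ vᵀ`, so the subtracted term of the MALP bracket is at most
`(1/γ² - 1) · v Σ_XX⁻¹ vᵀ`. Together with `2/(1+γ) ≥ 1` this makes the MALP bracket dominate the
LSLP bracket, and the common factor `σ_Y² (1 - γ²)` is nonnegative because `γ ≤ 1`.
-/

open Matrix

theorem Matrix.PosSemidef.dotProduct_mulVec_sq_le {n : Type*} [Fintype n] {M : Matrix n n ℝ}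
    (hM : M.PosSemidef) (u v : n → ℝ) :
    (u ⬝ᵥ (M *ᵥ v)) ^ 2 ≤ (u ⬝ᵥ (M *ᵥ u)) * (v ⬝ᵥ (M *ᵥ v)) := by
  let := M.toSeminormedAddCommGroup hM
  let := M.toInnerProductSpace hM
  have h := real_inner_mul_inner_self_le u v
  -- the induced inner product is `⟪x, y⟫ = (M *ᵥ y) ⬝ᵥ star x`
  change (M *ᵥ v) ⬝ᵥ star u * ((M *ᵥ v) ⬝ᵥ star u)
    ≤ (M *ᵥ u) ⬝ᵥ star u * ((M *ᵥ v) ⬝ᵥ star v) at h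
  simpa only [star_trivial, dotProduct_comm _ u, dotProduct_comm _ v, sq] using h

theorem lslp_bracket_le_malp_bracket {σ γ q s : ℝ} (hσ : σ ≠ 0) (hγ₀ : 0 < γ) (hγ₁ : γ ≤ 1)
    (hs : s ^ 2 ≤ σ ^ 2 * γ ^ 2 * q) :
    1 + q ≤ 2 / (1 + γ) + 1 / γ ^ 2 * q - (1 - γ ^ 2) / (σ ^ 2 * γ ^ 4) * s ^ 2 := by
  have hγ_le : 1 ≤ 2 / (1 + γ) := by
    rw [le_div_iff₀ (by linarith)]
    linarith
  have hs_le : (1 - γ ^ 2) / (σ ^ 2 * γ ^ 4) * s ^ 2 ≤ 1 / γ ^ 2 * q - q :=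
    calc (1 - γ ^ 2) / (σ ^ 2 * γ ^ 4) * s ^ 2
        ≤ (1 - γ ^ 2) / (σ ^ 2 * γ ^ 4) * (σ ^ 2 * γ ^ 2 * q) := by
          have hγ_sq : γ ^ 2 ≤ 1 := pow_le_one₀ hγ₀.le hγ₁
          gcongr
      _ = 1 / γ ^ 2 * q - q := by field_simp
  linarith

/-- With `γ = √(Σ_YX Σ_XX⁻¹ Σ_XY)/σ_Y ≤ 1`, the asymptotic variance of
the estimated MALP dominates that of the estimated LSLP: `σ_MA²(x₀) ≥ σ_LS²(x₀)` for all
`x₀` and `μ_X`. -/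
theorem malp_variance_ge_lslp_variance {p : ℕ}
    (SigXX : Matrix (Fin p) (Fin p) ℝ) (hPD : SigXX.PosDef)
    (SigXY : Fin p → ℝ) (hne : SigXY ≠ 0)
    (σY : ℝ) (hσY : 0 < σY)
    (γ : ℝ) (hγ : γ = Real.sqrt (SigXY ⬝ᵥ (SigXX⁻¹ *ᵥ SigXY)) / σY)
    (hγ1 : γ ≤ 1) :
    ∀ (x₀ μX : Fin p → ℝ),
      σY ^ 2 * (1 - γ ^ 2) * (2 / (1 + γ)
        + (1 / γ ^ 2) * ((x₀ - μX) ⬝ᵥ (SigXX⁻¹ *ᵥ (x₀ - μX)))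
        - ((1 - γ ^ 2) / (σY ^ 2 * γ ^ 4)) * (SigXY ⬝ᵥ (SigXX⁻¹ *ᵥ (x₀ - μX))) ^ 2)
      ≥ σY ^ 2 * (1 - γ ^ 2) * (1 + (x₀ - μX) ⬝ᵥ (SigXX⁻¹ *ᵥ (x₀ - μX))) := by
  intro x₀ μX
  have hc : 0 < SigXY ⬝ᵥ (SigXX⁻¹ *ᵥ SigXY) := by
    simpa using hPD.inv.dotProduct_mulVec_pos hne
  have hγ₀ : 0 < γ := hγ ▸ div_pos (Real.sqrt_pos.mpr hc) hσY
  have hσγ : σY ^ 2 * γ ^ 2 = SigXY ⬝ᵥ (SigXX⁻¹ *ᵥ SigXY) := by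
    rw [hγ, div_pow, Real.sq_sqrt hc.le]
    field_simp
  have hγ_sq : γ ^ 2 ≤ 1 := pow_le_one₀ hγ₀.le hγ1
  have hCS : (SigXY ⬝ᵥ (SigXX⁻¹ *ᵥ (x₀ - μX))) ^ 2
      ≤ σY ^ 2 * γ ^ 2 * ((x₀ - μX) ⬝ᵥ (SigXX⁻¹ *ᵥ (x₀ - μX))) :=
    hσγ ▸ hPD.inv.posSemidef.dotProduct_mulVec_sq_le SigXY (x₀ - μX)
  exact mul_le_mul_of_nonneg_left (lslp_bracket_le_malp_bracket hσY.ne' hγ₀ hγ1 hCS)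
    (mul_nonneg (sq_nonneg σY) (sub_nonneg.mpr hγ_sq))
end

section
/- Let {(X_i,Y_i)}_{i≥1} be i.i.d. copies of a random vector (X,Y) with X ∈ ℝ^p a random row vector and Y ∈ ℝ, having finite fourth moments, covariance matrix Σ_XX of X positive definite, Σ_XY ≠ 0, and σ_Y² = Var(Y) > 0; let γ = √(Σ_YX Σ_XX⁻¹ Σ_XY)/σ_Y and Ỹ*(x₀) = μ_Y + (x₀−μ_X)·(1/γ)Σ_XX⁻¹Σ_XY. Then for each fixed x₀ ∈ ℝ^p, the estimated maximum agreement linear predictor Ŷₙ*(x₀) converges in probability to Ỹ*(x₀) as n → ∞. -/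
/-! Every sample statistic entering `malpHat` is, up to the factor `n / (n - 1) → 1`, a polynomial
in empirical averages of the coordinates of `(Xᵢ, Yᵢ)` and of their pairwise products. These
products are integrable, so by the strong law of large numbers the sample means, covariances and
variance converge almost surely to their population counterparts. The predictor is continuous
at that limit, since `Σ_XX` is invertible there and both `Σ_YX Σ_XX⁻¹ Σ_XY` and `σ_Y²` are
positive; hence `Ŷₙ*(x₀)` converges almost surely, and therefore in probability. -/

open MeasureTheory ProbabilityTheory Matrix Filter

/-- Sample mean of the covariate vectors among the first `n` observations. -/
noncomputable def sampleXbar {Ω : Type*} {p : ℕ} (X : ℕ → Ω → Fin p → ℝ) (n : ℕ) (ω : Ω) :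
    Fin p → ℝ :=
  (n : ℝ)⁻¹ • ∑ i ∈ Finset.range n, X i ω

/-- Sample mean of the responses among the first `n` observations. -/
noncomputable def sampleYbar {Ω : Type*} (Y : ℕ → Ω → ℝ) (n : ℕ) (ω : Ω) : ℝ :=
  (n : ℝ)⁻¹ * ∑ i ∈ Finset.range n, Y i ω

/-- Sample covariance matrix `S_XX` of the covariates. -/
noncomputable def sampleSXX {Ω : Type*} {p : ℕ} (X : ℕ → Ω → Fin p → ℝ) (n : ℕ) (ω : Ω) :
    Matrix (Fin p) (Fin p) ℝ :=
  ((n : ℝ) - 1)⁻¹ • ∑ i ∈ Finset.range n,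
    vecMulVec (X i ω - sampleXbar X n ω) (X i ω - sampleXbar X n ω)

/-- Sample covariance vector `S_XY` between covariates and response. -/
noncomputable def sampleSXY {Ω : Type*} {p : ℕ} (X : ℕ → Ω → Fin p → ℝ) (Y : ℕ → Ω → ℝ)
    (n : ℕ) (ω : Ω) : Fin p → ℝ :=
  ((n : ℝ) - 1)⁻¹ • ∑ i ∈ Finset.range n, (Y i ω - sampleYbar Y n ω) • (X i ω - sampleXbar X n ω)

/-- Sample variance `S_Y²` of the response. -/
noncomputable def sampleSY2 {Ω : Type*} (Y : ℕ → Ω → ℝ) (n : ℕ) (ω : Ω) : ℝ :=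
  ((n : ℝ) - 1)⁻¹ * ∑ i ∈ Finset.range n, (Y i ω - sampleYbar Y n ω) ^ 2

/-- Sample multiple correlation coefficient `γ̂ₙ = √(S_YX S_XX⁻¹ S_XY)/S_Y`. -/
noncomputable def sampleGamma {Ω : Type*} {p : ℕ} (X : ℕ → Ω → Fin p → ℝ) (Y : ℕ → Ω → ℝ)
    (n : ℕ) (ω : Ω) : ℝ :=
  Real.sqrt (sampleSXY X Y n ω ⬝ᵥ ((sampleSXX X n ω)⁻¹ *ᵥ sampleSXY X Y n ω)) /
    Real.sqrt (sampleSY2 Y n ω)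

/-- Estimated maximum agreement linear predictor
`Ŷₙ*(x₀) = Ȳ + (x₀ − X̄)·(1/γ̂ₙ) S_XX⁻¹ S_XY`. -/
noncomputable def malpHat {Ω : Type*} {p : ℕ} (X : ℕ → Ω → Fin p → ℝ) (Y : ℕ → Ω → ℝ)
    (n : ℕ) (x₀ : Fin p → ℝ) (ω : Ω) : ℝ :=
  sampleYbar Y n ω + (x₀ - sampleXbar X n ω) ⬝ᵥ
    ((sampleGamma X Y n ω)⁻¹ • ((sampleSXX X n ω)⁻¹ *ᵥ sampleSXY X Y n ω))

/-- Estimated least-squares linear predictor `Ŷₙ†(x₀) = Ȳ + (x₀ − X̄)·S_XX⁻¹ S_XY`. -/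
noncomputable def lslpHat {Ω : Type*} {p : ℕ} (X : ℕ → Ω → Fin p → ℝ) (Y : ℕ → Ω → ℝ)
    (n : ℕ) (x₀ : Fin p → ℝ) (ω : Ω) : ℝ :=
  sampleYbar Y n ω + (x₀ - sampleXbar X n ω) ⬝ᵥ ((sampleSXX X n ω)⁻¹ *ᵥ sampleSXY X Y n ω)

open Topology Finset

noncomputable def sampleMean (a : ℕ → ℝ) (n : ℕ) : ℝ := (n : ℝ)⁻¹ * ∑ i ∈ range n, a i

noncomputable def sampleCov (a b : ℕ → ℝ) (n : ℕ) : ℝ :=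
  ((n : ℝ) - 1)⁻¹ * ∑ i ∈ range n, (a i - sampleMean a n) * (b i - sampleMean b n)

theorem sum_sub_sampleMean_mul_sub_sampleMean (a b : ℕ → ℝ) (n : ℕ) :
    ∑ i ∈ range n, (a i - sampleMean a n) * (b i - sampleMean b n) =
      n * (sampleMean (a * b) n - sampleMean a n * sampleMean b n) := by
  rcases Nat.eq_zero_or_pos n with rfl | hn
  · simp
  have hsum (c : ℕ → ℝ) : ∑ i ∈ range n, c i = n * sampleMean c n := by
    rw [sampleMean, mul_inv_cancel_left₀ (by positivity)]
  simp only [sub_mul, mul_sub, sum_sub_distrib, ← sum_mul, ← mul_sum, sum_const, card_range,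
    nsmul_eq_mul, hsum a, hsum b, ← hsum (a * b), Pi.mul_apply]
  ring

theorem tendsto_sampleCov {a b : ℕ → ℝ} {A B C : ℝ}
    (ha : Tendsto (sampleMean a) atTop (𝓝 A)) (hb : Tendsto (sampleMean b) atTop (𝓝 B))
    (hab : Tendsto (sampleMean (a * b)) atTop (𝓝 C)) :
    Tendsto (sampleCov a b) atTop (𝓝 (C - A * B)) := by
  have hratio : Tendsto (fun n : ℕ => (n : ℝ) / (n + -1)) atTop (𝓝 1) :=
    tendsto_natCast_div_add_atTop (-1 : ℝ)
  rw [← one_mul (C - A * B)]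
  refine (hratio.mul (hab.sub (ha.mul hb))).congr fun n => ?_
  rw [sampleCov, sum_sub_sampleMean_mul_sub_sampleMean, ← sub_eq_add_neg]
  ring

section SampleStatistics

variable {Ω : Type*} {p : ℕ} (X : ℕ → Ω → Fin p → ℝ) (Y : ℕ → Ω → ℝ) (n : ℕ) (ω : Ω)

theorem sampleXbar_apply (j : Fin p) : sampleXbar X n ω j = sampleMean (X · ω j) n := by
  simp [sampleXbar, sampleMean, Finset.sum_apply]

theorem sampleYbar_eq : sampleYbar Y n ω = sampleMean (Y · ω) n := rfl

theorem sampleSXX_apply (j l : Fin p) :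
    sampleSXX X n ω j l = sampleCov (X · ω j) (X · ω l) n := by
  simp [sampleSXX, sampleCov, Matrix.sum_apply, vecMulVec_apply, sampleXbar_apply]

theorem sampleSXY_apply (j : Fin p) :
    sampleSXY X Y n ω j = sampleCov (X · ω j) (Y · ω) n := by
  simp [sampleSXY, sampleCov, Finset.sum_apply, sampleXbar_apply, sampleYbar_eq, mul_comm]

theorem sampleSY2_eq : sampleSY2 Y n ω = sampleCov (Y · ω) (Y · ω) n := by
  simp [sampleSY2, sampleCov, sampleYbar_eq, sq]

end SampleStatistics

theorem Filter.Tendsto.dotProduct {α ι R : Type*} [Fintype ι] [TopologicalSpace R] [Mul R]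
    [AddCommMonoid R] [ContinuousAdd R] [ContinuousMul R] {l : Filter α} {u v : α → ι → R}
    {a b : ι → R} (hu : Tendsto u l (𝓝 a)) (hv : Tendsto v l (𝓝 b)) :
    Tendsto (fun x => u x ⬝ᵥ v x) l (𝓝 (a ⬝ᵥ b)) :=
  ((continuous_fst.dotProduct continuous_snd).tendsto (a, b)).comp (hu.prodMk_nhds hv)

theorem Filter.Tendsto.matrix_mulVec {α ι κ R : Type*} [Fintype κ] [TopologicalSpace R]
    [NonUnitalNonAssocSemiring R] [ContinuousAdd R] [ContinuousMul R] {l : Filter α}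
    {A : α → Matrix ι κ R} {v : α → κ → R} {M : Matrix ι κ R} {b : κ → R}
    (hA : Tendsto A l (𝓝 M)) (hv : Tendsto v l (𝓝 b)) :
    Tendsto (fun x => A x *ᵥ v x) l (𝓝 (M *ᵥ b)) :=
  ((continuous_fst.matrix_mulVec continuous_snd).tendsto (M, b)).comp (hA.prodMk_nhds hv)

theorem tendsto_malpHat {Ω : Type*} {p : ℕ} {X : ℕ → Ω → Fin p → ℝ} {Y : ℕ → Ω → ℝ} {ω : Ω}
    {m : Fin p → ℝ} {c : ℝ} {S : Matrix (Fin p) (Fin p) ℝ} {s : Fin p → ℝ} {v : ℝ}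
    (hS : S.det ≠ 0) (hq : 0 < s ⬝ᵥ (S⁻¹ *ᵥ s)) (hv : 0 < v)
    (hXbar : Tendsto (sampleXbar X · ω) atTop (𝓝 m))
    (hYbar : Tendsto (sampleYbar Y · ω) atTop (𝓝 c))
    (hSXX : Tendsto (sampleSXX X · ω) atTop (𝓝 S))
    (hSXY : Tendsto (sampleSXY X Y · ω) atTop (𝓝 s))
    (hSY2 : Tendsto (sampleSY2 Y · ω) atTop (𝓝 v)) (x₀ : Fin p → ℝ) :
    Tendsto (malpHat X Y · x₀ ω) atTop
      (𝓝 (c + (x₀ - m) ⬝ᵥ ((√(s ⬝ᵥ (S⁻¹ *ᵥ s)) / √v)⁻¹ • (S⁻¹ *ᵥ s)))) := by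
  have hinv : Tendsto (fun n => (sampleSXX X n ω)⁻¹) atTop (𝓝 S⁻¹) :=
    (continuousAt_matrix_inv S (by rw [Ring.inverse_eq_inv']; exact continuousAt_inv₀ hS)).tendsto
      |>.comp hSXX
  have hβ := hinv.matrix_mulVec hSXY
  have hγ : Tendsto (sampleGamma X Y · ω) atTop (𝓝 (√(s ⬝ᵥ (S⁻¹ *ᵥ s)) / √v)) :=
    ((hSXY.dotProduct hβ).sqrt).div hSY2.sqrt (Real.sqrt_pos.2 hv).ne'
  exact hYbar.add ((tendsto_const_nhds.sub hXbar).dotProduct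
    ((hγ.inv₀ (div_pos (Real.sqrt_pos.2 hq) (Real.sqrt_pos.2 hv)).ne').smul hβ))

section Measurability

variable {Ω : Type*} [MeasurableSpace Ω]

theorem measurable_sampleMean {a : ℕ → Ω → ℝ} (ha : ∀ i, Measurable (a i)) (n : ℕ) :
    Measurable fun ω => sampleMean (a · ω) n :=
  (measurable_sum _ fun i _ => ha i).const_mul _

theorem measurable_sampleCov {a b : ℕ → Ω → ℝ} (ha : ∀ i, Measurable (a i))
    (hb : ∀ i, Measurable (b i)) (n : ℕ) : Measurable fun ω => sampleCov (a · ω) (b · ω) n :=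
  (measurable_sum _ fun i _ => ((ha i).sub (measurable_sampleMean ha n)).mul
    ((hb i).sub (measurable_sampleMean hb n))).const_mul _

theorem measurable_matrix_inv_apply {ι : Type*} [Fintype ι] [DecidableEq ι]
    {A : Ω → Matrix ι ι ℝ} (hA : ∀ i j, Measurable fun ω => A ω i j) (i j : ι) :
    Measurable fun ω => (A ω)⁻¹ i j := by
  -- `Matrix` has no `MeasurableSpace` instance: work on the underlying type `ι → ι → ℝ`.
  have hA' : Measurable fun ω => Matrix.of.symm (A ω) :=
    measurable_pi_lambda _ fun i => measurable_pi_lambda _ fun j => hA i j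
  have hdet : Continuous fun M : ι → ι → ℝ => (Matrix.of M).det := continuous_id.matrix_det
  have hadj : Continuous fun M : ι → ι → ℝ => (Matrix.of M).adjugate i j :=
    (continuous_id.matrix_adjugate).matrix_elem i j
  simp only [Matrix.inv_def, Ring.inverse_eq_inv', Matrix.smul_apply, smul_eq_mul]
  exact (hdet.measurable.comp hA').inv.mul (hadj.measurable.comp hA')

theorem measurable_malpHat {p : ℕ} {X : ℕ → Ω → Fin p → ℝ} {Y : ℕ → Ω → ℝ}
    (hX : ∀ i, Measurable (X i)) (hY : ∀ i, Measurable (Y i)) (n : ℕ) (x₀ : Fin p → ℝ) :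
    Measurable (malpHat X Y n x₀) := by
  have hXj (j : Fin p) (i : ℕ) : Measurable fun ω => X i ω j := (measurable_pi_apply j).comp (hX i)
  have hXbar (j : Fin p) : Measurable fun ω => sampleXbar X n ω j := by
    simpa only [sampleXbar_apply] using measurable_sampleMean (hXj j) n
  have hSXY (j : Fin p) : Measurable fun ω => sampleSXY X Y n ω j := by
    simpa only [sampleSXY_apply] using measurable_sampleCov (hXj j) hY n
  have hInv := measurable_matrix_inv_apply (A := (sampleSXX X n ·)) fun j l => by
    simpa only [sampleSXX_apply] using measurable_sampleCov (hXj j) (hXj l) n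
  have hβ (j : Fin p) : Measurable fun ω => ((sampleSXX X n ω)⁻¹ *ᵥ sampleSXY X Y n ω) j := by
    simp only [Matrix.mulVec, dotProduct]
    exact measurable_sum _ fun l _ => (hInv j l).mul (hSXY l)
  have hSY2 : Measurable fun ω => sampleSY2 Y n ω := by
    simpa only [sampleSY2_eq] using measurable_sampleCov hY hY n
  have hγ : Measurable fun ω => sampleGamma X Y n ω :=
    ((measurable_sum _ fun j _ => (hSXY j).mul (hβ j)).sqrt).div hSY2.sqrt
  exact (measurable_sampleMean hY n).add (measurable_sum _ fun j _ =>
    (measurable_const.sub (hXbar j)).mul (hγ.inv.mul (hβ j)))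

end Measurability

section StrongLaw

variable {Ω E : Type*} [MeasurableSpace Ω] [MeasurableSpace E] {μ : Measure Ω}
  {Z : ℕ → Ω → E}

theorem ae_tendsto_sampleMean_comp (hindep : Pairwise fun i j => IndepFun (Z i) (Z j) μ)
    (hident : ∀ i, IdentDistrib (Z i) (Z 0) μ μ) {f : E → ℝ} (hf : Measurable f)
    (hint : Integrable (f ∘ Z 0) μ) :
    ∀ᵐ ω ∂μ, Tendsto (sampleMean fun i => f (Z i ω)) atTop (𝓝 μ[f ∘ Z 0]) :=
  strong_law_ae (fun i => f ∘ Z i) hint (fun _ _ hij => (hindep hij).comp hf hf)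
    fun i => (hident i).comp hf

theorem ae_tendsto_sampleCov_comp [IsProbabilityMeasure μ]
    (hindep : Pairwise fun i j => IndepFun (Z i) (Z j) μ)
    (hident : ∀ i, IdentDistrib (Z i) (Z 0) μ μ) {f g : E → ℝ} (hf : Measurable f)
    (hg : Measurable g) (hf2 : MemLp (f ∘ Z 0) 2 μ) (hg2 : MemLp (g ∘ Z 0) 2 μ) :
    ∀ᵐ ω ∂μ, Tendsto (sampleCov (fun i => f (Z i ω)) (fun i => g (Z i ω))) atTop
      (𝓝 cov[f ∘ Z 0, g ∘ Z 0; μ]) := by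
  rw [covariance_eq_sub hf2 hg2]
  filter_upwards [ae_tendsto_sampleMean_comp hindep hident hf (hf2.integrable one_le_two),
    ae_tendsto_sampleMean_comp hindep hident hg (hg2.integrable one_le_two),
    ae_tendsto_sampleMean_comp hindep hident (hf.mul hg) (hf2.integrable_mul hg2)]
    with ω hfω hgω hfgω
  exact tendsto_sampleCov hfω hgω hfgω

end StrongLaw

theorem ae_tendsto_sampleStatistics {Ω : Type*} [MeasureSpace Ω]
    [IsProbabilityMeasure (ℙ : Measure Ω)] {p : ℕ} {X : ℕ → Ω → Fin p → ℝ} {Y : ℕ → Ω → ℝ}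
    (hXm : ∀ i, Measurable (X i)) (hYm : ∀ i, Measurable (Y i))
    (hindep : iIndepFun (fun i ω => (X i ω, Y i ω)) ℙ)
    (hid : ∀ i, Measure.map (fun ω => (X i ω, Y i ω)) ℙ
      = Measure.map (fun ω => (X 0 ω, Y 0 ω)) ℙ)
    (hX2 : ∀ j, MemLp (fun ω => X 0 ω j) 2 ℙ) (hY2 : MemLp (Y 0) 2 ℙ) :
    ∀ᵐ ω, Tendsto (sampleXbar X · ω) atTop (𝓝 fun j => pMean fun ω => X 0 ω j) ∧
      Tendsto (sampleYbar Y · ω) atTop (𝓝 (pMean (Y 0))) ∧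
      Tendsto (sampleSXX X · ω) atTop
        (𝓝 (Matrix.of fun j l => pCov (fun ω => X 0 ω j) (fun ω => X 0 ω l))) ∧
      Tendsto (sampleSXY X Y · ω) atTop (𝓝 fun j => pCov (fun ω => X 0 ω j) (Y 0)) ∧
      Tendsto (sampleSY2 Y · ω) atTop (𝓝 (pVar (Y 0))) := by
  set Z : ℕ → Ω → (Fin p → ℝ) × ℝ := fun i ω => (X i ω, Y i ω)
  have hZ (i : ℕ) : Measurable (Z i) := (hXm i).prodMk (hYm i)
  have hpair : Pairwise fun i j => IndepFun (Z i) (Z j) ℙ := fun _ _ hij => hindep.indepFun hij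
  have hident (i : ℕ) : IdentDistrib (Z i) (Z 0) ℙ ℙ :=
    ⟨(hZ i).aemeasurable, (hZ 0).aemeasurable, hid i⟩
  have hfst (j : Fin p) : Measurable fun z : (Fin p → ℝ) × ℝ => z.1 j :=
    (measurable_pi_apply j).comp measurable_fst
  have mean {f : (Fin p → ℝ) × ℝ → ℝ} (hf : Measurable f) (hf2 : MemLp (f ∘ Z 0) 2 ℙ) :=
    ae_tendsto_sampleMean_comp hpair hident hf (hf2.integrable one_le_two)
  have cov {f g : (Fin p → ℝ) × ℝ → ℝ} (hf : Measurable f) (hg : Measurable g)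
      (hf2 : MemLp (f ∘ Z 0) 2 ℙ) (hg2 : MemLp (g ∘ Z 0) 2 ℙ) :=
    ae_tendsto_sampleCov_comp hpair hident hf hg hf2 hg2
  filter_upwards [ae_all_iff.2 fun j => mean (hfst j) (hX2 j), mean measurable_snd hY2,
    ae_all_iff.2 fun j => ae_all_iff.2 fun l => cov (hfst j) (hfst l) (hX2 j) (hX2 l),
    ae_all_iff.2 fun j => cov (hfst j) measurable_snd (hX2 j) hY2,
    cov measurable_snd measurable_snd hY2 hY2] with ω hXbar hYbar hSXX hSXY hSY2
  refine ⟨tendsto_pi_nhds.2 fun j => ?_, hYbar,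
    tendsto_pi_nhds.2 fun j => tendsto_pi_nhds.2 fun l => ?_, tendsto_pi_nhds.2 fun j => ?_, ?_⟩
  · simp only [sampleXbar_apply]
    exact hXbar j
  · simp only [sampleSXX_apply, Matrix.of_apply]
    exact hSXX j l
  · simp only [sampleSXY_apply]
    exact hSXY j
  · simp only [sampleSY2_eq]
    exact hSY2

theorem malpHat_tendstoInMeasure_general {Ω : Type*} [MeasureSpace Ω]
    [IsProbabilityMeasure (ℙ : Measure Ω)] {p : ℕ}
    (X : ℕ → Ω → Fin p → ℝ) (Y : ℕ → Ω → ℝ)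
    (hXm : ∀ i, Measurable (X i)) (hYm : ∀ i, Measurable (Y i))
    (hindep : iIndepFun (fun i ω => (X i ω, Y i ω)) ℙ)
    (hid : ∀ i, Measure.map (fun ω => (X i ω, Y i ω)) ℙ
      = Measure.map (fun ω => (X 0 ω, Y 0 ω)) ℙ)
    (hX4 : ∀ j, MemLp (fun ω => X 0 ω j) 4 ℙ) (hY4 : MemLp (Y 0) 4 ℙ)
    (μX : Fin p → ℝ) (hμX : μX = fun j => pMean (fun ω => X 0 ω j))
    (μY : ℝ) (hμY : μY = pMean (Y 0))
    (SigXX : Matrix (Fin p) (Fin p) ℝ)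
    (hSigXX : SigXX = Matrix.of fun j l => pCov (fun ω => X 0 ω j) (fun ω => X 0 ω l))
    (hPD : SigXX.PosDef)
    (SigXY : Fin p → ℝ) (hSigXY : SigXY = fun j => pCov (fun ω => X 0 ω j) (Y 0))
    (hne : SigXY ≠ 0)
    (hvar : 0 < pVar (Y 0))
    (γ : ℝ) (hγ : γ = Real.sqrt (SigXY ⬝ᵥ (SigXX⁻¹ *ᵥ SigXY)) / Real.sqrt (pVar (Y 0)))
    (x₀ : Fin p → ℝ) :
    TendstoInMeasure ℙ (fun n ω => malpHat X Y n x₀ ω) atTop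
      (fun _ => μY + (x₀ - μX) ⬝ᵥ (γ⁻¹ • (SigXX⁻¹ *ᵥ SigXY))) := by
  have hq : 0 < SigXY ⬝ᵥ (SigXX⁻¹ *ᵥ SigXY) := by
    simpa using hPD.inv.dotProduct_mulVec_pos hne
  subst hμX hμY hSigXX hSigXY hγ
  refine tendstoInMeasure_of_tendsto_ae
    (fun n => (measurable_malpHat hXm hYm n x₀).aestronglyMeasurable) ?_
  filter_upwards [ae_tendsto_sampleStatistics hXm hYm hindep hid
    (fun j => (hX4 j).mono_exponent (by norm_num)) (hY4.mono_exponent (by norm_num))]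
    with ω ⟨hXbar, hYbar, hSXX, hSXY, hSY2⟩
  exact tendsto_malpHat hPD.det_pos.ne' hq hvar hXbar hYbar hSXX hSXY hSY2 x₀

/-- For i.i.d. data with finite fourth moments, positive definite
`Σ_XX`, `Σ_XY ≠ 0` and `Var Y > 0`, the estimated MALP at a fixed point `x₀` converges
in probability to the true MALP `Ỹ*(x₀) = μ_Y + (x₀−μ_X)·(1/γ)Σ_XX⁻¹Σ_XY`. -/
theorem malpHat_tendstoInMeasure {Ω : Type*} [MeasureSpace Ω]
    [IsProbabilityMeasure (ℙ : Measure Ω)] {p : ℕ} (hp : 0 < p)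
    (X : ℕ → Ω → Fin p → ℝ) (Y : ℕ → Ω → ℝ)
    (hXm : ∀ i, Measurable (X i)) (hYm : ∀ i, Measurable (Y i))
    (hindep : iIndepFun (fun i ω => (X i ω, Y i ω)) ℙ)
    (hid : ∀ i, Measure.map (fun ω => (X i ω, Y i ω)) ℙ
      = Measure.map (fun ω => (X 0 ω, Y 0 ω)) ℙ)
    (hX4 : ∀ j, MemLp (fun ω => X 0 ω j) 4 ℙ) (hY4 : MemLp (Y 0) 4 ℙ)
    (μX : Fin p → ℝ) (hμX : μX = fun j => pMean (fun ω => X 0 ω j))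
    (μY : ℝ) (hμY : μY = pMean (Y 0))
    (SigXX : Matrix (Fin p) (Fin p) ℝ)
    (hSigXX : SigXX = Matrix.of fun j l => pCov (fun ω => X 0 ω j) (fun ω => X 0 ω l))
    (hPD : SigXX.PosDef)
    (SigXY : Fin p → ℝ) (hSigXY : SigXY = fun j => pCov (fun ω => X 0 ω j) (Y 0))
    (hne : SigXY ≠ 0)
    (hvar : 0 < pVar (Y 0))
    (γ : ℝ) (hγ : γ = Real.sqrt (SigXY ⬝ᵥ (SigXX⁻¹ *ᵥ SigXY)) / Real.sqrt (pVar (Y 0)))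
    (x₀ : Fin p → ℝ) :
    TendstoInMeasure ℙ (fun n ω => malpHat X Y n x₀ ω) atTop
      (fun _ => μY + (x₀ - μX) ⬝ᵥ (γ⁻¹ • (SigXX⁻¹ *ᵥ SigXY))) :=
  malpHat_tendstoInMeasure_general X Y hXm hYm hindep hid hX4 hY4 μX hμX μY hμY SigXX hSigXX hPD
    SigXY hSigXY hne hvar γ hγ x₀
end

section
/- Let S be a p×p real symmetric positive definite matrix, c ∈ ℝ^p a nonzero column vector, and σ > 0. Then for every β ∈ ℝ^p, 2(cᵀβ)/(σ² + βᵀSβ) ≤ √(cᵀS⁻¹c)/σ, and equality holds if and only if β = σ·S⁻¹c/√(cᵀS⁻¹c). -/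
open Matrix

/-! Write `γ = √(cᵀS⁻¹c)` and `δ = β - (σ/γ) S⁻¹c`. Completing the square in the quadratic form
of `S` gives `γ/σ - 2cᵀβ/(σ² + βᵀSβ) = γ · δᵀSδ / (σ(σ² + βᵀSβ))`, so the gap is nonnegative by
positive definiteness, and it vanishes exactly when `δ = 0`. -/

namespace Matrix

variable {n R : Type*} [Fintype n]

theorem IsSymm.dotProduct_mulVec_comm [CommSemiring R] {S : Matrix n n R} (hS : S.IsSymm)
    (x y : n → R) : x ⬝ᵥ S *ᵥ y = y ⬝ᵥ S *ᵥ x := by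
  rw [dotProduct_mulVec, ← mulVec_transpose, hS.eq, dotProduct_comm]

theorem IsSymm.dotProduct_mulVec_sub_smul_inv_mulVec [DecidableEq n] [CommRing R]
    {S : Matrix n n R} (hS : S.IsSymm) (hdet : IsUnit S.det) (β c : n → R) (t : R) :
    (β - t • S⁻¹ *ᵥ c) ⬝ᵥ S *ᵥ (β - t • S⁻¹ *ᵥ c) =
      β ⬝ᵥ S *ᵥ β - 2 * t * (c ⬝ᵥ β) + t ^ 2 * (c ⬝ᵥ S⁻¹ *ᵥ c) := by
  have hSm : S *ᵥ S⁻¹ *ᵥ c = c := by rw [mulVec_mulVec, mul_nonsing_inv _ hdet, one_mulVec]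
  have hmS : S⁻¹ *ᵥ c ⬝ᵥ S *ᵥ β = c ⬝ᵥ β := by
    rw [hS.dotProduct_mulVec_comm, hSm, dotProduct_comm]
  rw [mulVec_sub, mulVec_smul, dotProduct_sub, sub_dotProduct, sub_dotProduct, smul_dotProduct,
    smul_dotProduct, dotProduct_smul, dotProduct_smul, hSm, hmS, dotProduct_comm β c,
    dotProduct_comm _ c, smul_eq_mul, smul_eq_mul, smul_eq_mul]
  ring

theorem PosDef.dotProduct_mulVec_eq_zero_iff [Ring R] [PartialOrder R] [StarRing R]
    {M : Matrix n n R} (hM : M.PosDef) {x : n → R} : star x ⬝ᵥ M *ᵥ x = 0 ↔ x = 0 := by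
  refine ⟨fun h ↦ ?_, by rintro rfl; simp⟩
  by_contra hx
  exact (hM.dotProduct_mulVec_pos hx).ne' h

end Matrix

theorem Real.sqrt_div_sub_two_mul_div {a b g σ : ℝ} (hg : 0 < g) (hσ : σ ≠ 0)
    (hD : σ ^ 2 + b ≠ 0) :
    √g / σ - 2 * a / (σ ^ 2 + b) =
      √g * (b - 2 * (σ / √g) * a + (σ / √g) ^ 2 * g) / (σ * (σ ^ 2 + b)) := by
  have hγ : √g ≠ 0 := (Real.sqrt_pos.mpr hg).ne'
  have hγ2 : √g ^ 2 = g := Real.sq_sqrt hg.le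
  field_simp
  linear_combination σ ^ 2 * hγ2

/-- Deterministic optimization core of the MALP: for a positive
definite `S`, nonzero `c` and `σ > 0`, the map `β ↦ 2(cᵀβ)/(σ² + βᵀSβ)` is bounded by
`√(cᵀS⁻¹c)/σ`, with equality exactly at `β = σ·S⁻¹c/√(cᵀS⁻¹c)`. -/
theorem ccc_slope_optimization {p : ℕ}
    (S : Matrix (Fin p) (Fin p) ℝ) (hS : S.PosDef)
    (c : Fin p → ℝ) (hc : c ≠ 0) (σ : ℝ) (hσ : 0 < σ) (β : Fin p → ℝ) :
    2 * (c ⬝ᵥ β) / (σ ^ 2 + β ⬝ᵥ (S *ᵥ β)) ≤ Real.sqrt (c ⬝ᵥ (S⁻¹ *ᵥ c)) / σ ∧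
    (2 * (c ⬝ᵥ β) / (σ ^ 2 + β ⬝ᵥ (S *ᵥ β)) = Real.sqrt (c ⬝ᵥ (S⁻¹ *ᵥ c)) / σ ↔
      β = (σ / Real.sqrt (c ⬝ᵥ (S⁻¹ *ᵥ c))) • (S⁻¹ *ᵥ c)) := by
  have hg : 0 < c ⬝ᵥ S⁻¹ *ᵥ c := by simpa using hS.inv.dotProduct_mulVec_pos hc
  have hγ : 0 < √(c ⬝ᵥ S⁻¹ *ᵥ c) := Real.sqrt_pos.mpr hg
  have hD : 0 < σ ^ 2 + β ⬝ᵥ S *ᵥ β := by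
    have := hS.posSemidef.dotProduct_mulVec_nonneg β
    simp only [star_trivial] at this
    positivity
  set δ := β - (σ / √(c ⬝ᵥ S⁻¹ *ᵥ c)) • S⁻¹ *ᵥ c
  have hgap : √(c ⬝ᵥ S⁻¹ *ᵥ c) / σ - 2 * (c ⬝ᵥ β) / (σ ^ 2 + β ⬝ᵥ S *ᵥ β) =
      √(c ⬝ᵥ S⁻¹ *ᵥ c) * (δ ⬝ᵥ S *ᵥ δ) / (σ * (σ ^ 2 + β ⬝ᵥ S *ᵥ β)) := by
    rw [(isHermitian_iff_isSymm.mp hS.isHermitian).dotProduct_mulVec_sub_smul_inv_mulVec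
      (isUnit_iff_ne_zero.mpr hS.det_pos.ne')]
    exact Real.sqrt_div_sub_two_mul_div hg hσ.ne' hD.ne'
  have hδ : 0 ≤ δ ⬝ᵥ S *ᵥ δ := by simpa using hS.posSemidef.dotProduct_mulVec_nonneg δ
  have hδ0 : δ ⬝ᵥ S *ᵥ δ = 0 ↔ β = (σ / √(c ⬝ᵥ S⁻¹ *ᵥ c)) • S⁻¹ *ᵥ c := by
    simpa [δ, sub_eq_zero] using hS.dotProduct_mulVec_eq_zero_iff (x := δ)
  constructor
  · rw [← sub_nonneg, hgap]
    positivity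
  · rw [eq_comm, ← sub_eq_zero, hgap, ← hδ0]
    simp [hγ.ne', hσ.ne', hD.ne']
end

section
/- For square-integrable real random variables U and V with positive variances, |CCC(U,V)| ≤ |ρ(U,V)|; moreover, if ρ(U,V) ≠ 0, then |CCC(U,V)| = |ρ(U,V)| if and only if E[U] = E[V] and Var(U) = Var(V). -/
open MeasureTheory ProbabilityTheory Matrix

/-- Pearson correlation coefficient of two real random variables. -/
noncomputable def pPCC {Ω : Type*} [MeasureSpace Ω] (U V : Ω → ℝ) : ℝ :=
  pCov U V / (Real.sqrt (pVar U) * Real.sqrt (pVar V))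

/-!
The Pearson coefficient divides `Cov(U,V)` by the geometric mean `√Var U · √Var V`, while
`CCC` divides it by `(Var U + Var V + (E U - E V)²) / 2`. The second denominator dominates the
first, since their difference is `((√Var U - √Var V)² + (E U - E V)²) / 2`; it vanishes exactly
when the means and the variances agree.
-/

theorem Real.sqrt_mul_sqrt_le_add_add_sq_div_two {a b : ℝ} (ha : 0 ≤ a) (hb : 0 ≤ b) (d : ℝ) :
    √a * √b ≤ (a + b + d ^ 2) / 2 := by
  nlinarith [sq_nonneg (√a - √b), sq_nonneg d, Real.sq_sqrt ha, Real.sq_sqrt hb]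

theorem Real.sqrt_mul_sqrt_eq_add_add_sq_div_two_iff {a b : ℝ} (ha : 0 ≤ a) (hb : 0 ≤ b)
    (d : ℝ) : √a * √b = (a + b + d ^ 2) / 2 ↔ d = 0 ∧ a = b := by
  constructor
  · intro h
    have hsq : (√a - √b) ^ 2 + d ^ 2 = 0 := by
      nlinarith [Real.sq_sqrt ha, Real.sq_sqrt hb]
    obtain ⟨hsqrt, hd⟩ := (add_eq_zero_iff_of_nonneg (sq_nonneg _) (sq_nonneg _)).mp hsq
    exact ⟨pow_eq_zero_iff two_ne_zero |>.mp hd,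
      (Real.sqrt_inj ha hb).mp (sub_eq_zero.mp (pow_eq_zero_iff two_ne_zero |>.mp hsqrt))⟩
  · rintro ⟨rfl, rfl⟩
    rw [Real.mul_self_sqrt ha]
    ring

section LinearOrderedField

variable {α : Type*} [Field α] [LinearOrder α] [IsStrictOrderedRing α]

theorem abs_div_le_abs_div_of_le {x p q : α} (hp : 0 < p) (hpq : p ≤ q) :
    |x / q| ≤ |x / p| := by
  rw [abs_div, abs_div, abs_of_pos hp, abs_of_pos (hp.trans_le hpq)]
  exact div_le_div_of_nonneg_left (abs_nonneg x) hp hpq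

theorem abs_div_eq_abs_div_iff {x p q : α} (hx : x ≠ 0) (hp : 0 < p) (hq : 0 < q) :
    |x / q| = |x / p| ↔ p = q := by
  rw [abs_div, abs_div, abs_of_pos hp, abs_of_pos hq,
    div_eq_mul_inv, div_eq_mul_inv, mul_right_inj' (abs_pos.mpr hx).ne', _root_.inv_inj, eq_comm]

end LinearOrderedField

theorem CCC_eq_pCov_div {Ω : Type*} [MeasureSpace Ω] (U V : Ω → ℝ) :
    CCC U V = pCov U V / ((pVar U + pVar V + (pMean U - pMean V) ^ 2) / 2) := by
  rw [CCC, div_div_eq_mul_div, mul_comm]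

theorem abs_ccc_le_abs_pcc_general {Ω : Type*} [MeasureSpace Ω]
    (U V : Ω → ℝ)
    (hvarU : 0 < pVar U) (hvarV : 0 < pVar V) :
    |CCC U V| ≤ |pPCC U V| ∧
    (pPCC U V ≠ 0 →
      (|CCC U V| = |pPCC U V| ↔ pMean U = pMean V ∧ pVar U = pVar V)) := by
  have hgeom : 0 < √(pVar U) * √(pVar V) :=
    mul_pos (Real.sqrt_pos.mpr hvarU) (Real.sqrt_pos.mpr hvarV)
  have hle := Real.sqrt_mul_sqrt_le_add_add_sq_div_two hvarU.le hvarV.le (pMean U - pMean V)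
  rw [CCC_eq_pCov_div, pPCC]
  refine ⟨abs_div_le_abs_div_of_le hgeom hle, fun hne => ?_⟩
  have hcov : pCov U V ≠ 0 := fun h => hne (by rw [h, zero_div])
  rw [abs_div_eq_abs_div_iff hcov hgeom (hgeom.trans_le hle),
    Real.sqrt_mul_sqrt_eq_add_add_sq_div_two_iff hvarU.le hvarV.le, sub_eq_zero]

/-- `|CCC(U,V)| ≤ |ρ(U,V)|`, and when `ρ(U,V) ≠ 0`, equality holds if
and only if `E[U] = E[V]` and `Var(U) = Var(V)`. -/
theorem abs_ccc_le_abs_pcc {Ω : Type*} [MeasureSpace Ω]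
    [IsProbabilityMeasure (ℙ : Measure Ω)]
    (U V : Ω → ℝ) (hU : MemLp U 2 ℙ) (hV : MemLp V 2 ℙ)
    (hvarU : 0 < pVar U) (hvarV : 0 < pVar V) :
    |CCC U V| ≤ |pPCC U V| ∧
    (pPCC U V ≠ 0 →
      (|CCC U V| = |pPCC U V| ↔ pMean U = pMean V ∧ pVar U = pVar V)) :=
  abs_ccc_le_abs_pcc_general U V hvarU hvarV
end

section
/- Let A : Ω → ℝ^p be a square-integrable random row vector with mean μ_A and covariance matrix Σ_A, B : Ω → ℝ a square-integrable random variable with mean μ_B and variance σ_B², and let c ∈ ℝ^p be the vector of covariances Cov(A_j, B). Let W : Ω → ℝ^p be a square-integrable random column vector independent of the pair (A, B). Then for every fixed x₀ ∈ ℝ^p (row vector), the random variable L = B + (x₀ − A)·W satisfies E[L] = μ_B + (x₀ − μ_A)·E[W] and Var[L] = (x₀ − μ_A)·Cov(W)·(x₀ − μ_A)ᵀ + σ_B² + tr(Σ_A·E[WWᵀ]) − 2·cᵀE[W], where Cov(W) = E[WWᵀ] − E[W]E[W]ᵀ. -/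
open MeasureTheory ProbabilityTheory Matrix

/-!
Write `L = B + ∑ⱼ Yⱼ Wⱼ` with `Y = x₀ - A` and expand `Var L` bilinearly. Every covariance
that appears is a covariance of products `X Y` and `U V` with `(X, U)` independent of `(Y, V)`,
and for those `E[X Y U V] = E[X U] E[Y V]` gives
`Cov(X Y, U V) = Cov(X, U) E[Y V] + E[X] E[U] Cov(Y, V)`;
independence also keeps the products square-integrable. With `Cov(Yⱼ, Yₗ) = Cov(Aⱼ, Aₗ)` and
`Cov(B, Yⱼ) = -cⱼ` the sum is the stated quadratic form, trace and cross term.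
-/

lemma Matrix.trace_mul_eq_sum_sum_of_isSymm {n R : Type*} [Fintype n] [CommSemiring R]
    {S M : Matrix n n R} (hM : M.IsSymm) : trace (S * M) = ∑ i, ∑ j, S i j * M i j := by
  simp only [trace, diag_apply, mul_apply, hM.apply]

lemma Matrix.dotProduct_mulVec_eq_sum_sum {n R : Type*} [Fintype n] [CommSemiring R]
    (v w : n → R) (M : Matrix n n R) : v ⬝ᵥ (M *ᵥ w) = ∑ i, ∑ j, v i * w j * M i j := by
  simp only [dotProduct, mulVec, Finset.mul_sum]
  exact Finset.sum_congr rfl fun i _ ↦ Finset.sum_congr rfl fun j _ ↦ by ring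

namespace ProbabilityTheory

variable {Ω : Type*} {mΩ : MeasurableSpace Ω} {μ : Measure Ω}

lemma IndepFun.memLp_two_mul {X Y : Ω → ℝ} (hXY : X ⟂ᵢ[μ] Y) (hX : MemLp X 2 μ)
    (hY : MemLp Y 2 μ) : MemLp (X * Y) 2 μ := by
  refine (memLp_two_iff_integrable_sq (hX.1.mul hY.1)).2 ?_
  have hsq := (hXY.comp (measurable_id.pow_const 2) (measurable_id.pow_const 2)).integrable_mul
    hX.integrable_sq hY.integrable_sq
  convert hsq using 1
  ext ω
  simp [mul_pow]

lemma covariance_mul_mul_of_indepFun [IsProbabilityMeasure μ] {X U Y V : Ω → ℝ}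
    (hind : (fun ω ↦ (X ω, U ω)) ⟂ᵢ[μ] (fun ω ↦ (Y ω, V ω)))
    (hX : MemLp X 2 μ) (hU : MemLp U 2 μ) (hY : MemLp Y 2 μ) (hV : MemLp V 2 μ) :
    cov[X * Y, U * V; μ] = cov[X, U; μ] * μ[Y * V] + μ[X] * μ[U] * cov[Y, V; μ] := by
  have hXY : X ⟂ᵢ[μ] Y := hind.comp measurable_fst measurable_fst
  have hUV : U ⟂ᵢ[μ] V := hind.comp measurable_snd measurable_snd
  have hXU_YV : (X * U) ⟂ᵢ[μ] (Y * V) :=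
    hind.comp (measurable_fst.mul measurable_snd) (measurable_fst.mul measurable_snd)
  rw [covariance_eq_sub (hXY.memLp_two_mul hX hY) (hUV.memLp_two_mul hU hV),
    covariance_eq_sub hX hU, covariance_eq_sub hY hV, mul_mul_mul_comm,
    hXU_YV.integral_mul_eq_mul_integral (hX.1.mul hU.1) (hY.1.mul hV.1),
    hXY.integral_mul_eq_mul_integral hX.1 hY.1, hUV.integral_mul_eq_mul_integral hU.1 hV.1]
  ring

lemma covariance_mul_right_of_indepFun [IsProbabilityMeasure μ] {X U V : Ω → ℝ}
    (hind : (fun ω ↦ (X ω, U ω)) ⟂ᵢ[μ] V)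
    (hX : MemLp X 2 μ) (hU : MemLp U 2 μ) (hV : MemLp V 2 μ) :
    cov[X, U * V; μ] = cov[X, U; μ] * μ[V] := by
  have h := covariance_mul_mul_of_indepFun (Y := 1)
    (hind.comp measurable_id (measurable_const.prodMk measurable_id)) hX hU (memLp_const 1) hV
  rwa [mul_one, one_mul, Pi.one_def, covariance_const_left, mul_zero, add_zero] at h

lemma covariance_const_sub_const_sub [IsProbabilityMeasure μ] {X Y : Ω → ℝ} (hX : Integrable X μ)
    (hY : Integrable Y μ) (a b : ℝ) :
    cov[fun ω ↦ a - X ω, fun ω ↦ b - Y ω; μ] = cov[X, Y; μ] := by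
  rw [covariance_const_sub_left hX, covariance_const_sub_right hY, neg_neg]

variable {ι : Type*} [Fintype ι]

lemma integral_add_dotProduct_of_indepFun {B : Ω → ℝ} {Y W : Ω → ι → ℝ} (hind : Y ⟂ᵢ[μ] W)
    (hB : Integrable B μ) (hY : ∀ i, Integrable (fun ω ↦ Y ω i) μ)
    (hW : ∀ i, Integrable (fun ω ↦ W ω i) μ) :
    ∫ ω, B ω + Y ω ⬝ᵥ W ω ∂μ = μ[B] + (fun i ↦ ∫ ω, Y ω i ∂μ) ⬝ᵥ (fun i ↦ ∫ ω, W ω i ∂μ) := by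
  have hYW : ∀ i, (fun ω ↦ Y ω i) ⟂ᵢ[μ] (fun ω ↦ W ω i) := fun i ↦
    hind.comp (measurable_pi_apply i) (measurable_pi_apply i)
  have hterm : ∀ i, Integrable (fun ω ↦ Y ω i * W ω i) μ := fun i ↦
    (hYW i).integrable_mul (hY i) (hW i)
  simp only [dotProduct]
  rw [integral_add hB (integrable_finsetSum _ fun i _ ↦ hterm i),
    integral_finsetSum _ fun i _ ↦ hterm i]
  congr 1
  exact Finset.sum_congr rfl fun i _ ↦
    (hYW i).integral_fun_mul_eq_mul_integral (hY i).1 (hW i).1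

lemma variance_add_dotProduct_of_indepFun [IsProbabilityMeasure μ] {B : Ω → ℝ} {Y W : Ω → ι → ℝ}
    (hind : (fun ω ↦ (Y ω, B ω)) ⟂ᵢ[μ] W) (hB : MemLp B 2 μ)
    (hY : ∀ i, MemLp (fun ω ↦ Y ω i) 2 μ) (hW : ∀ i, MemLp (fun ω ↦ W ω i) 2 μ) :
    Var[fun ω ↦ B ω + Y ω ⬝ᵥ W ω; μ] = Var[B; μ]
      + 2 * ∑ i, cov[B, fun ω ↦ Y ω i; μ] * μ[fun ω ↦ W ω i]
      + ∑ i, ∑ j, (cov[fun ω ↦ Y ω i, fun ω ↦ Y ω j; μ] * μ[fun ω ↦ W ω i * W ω j]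
        + μ[fun ω ↦ Y ω i] * μ[fun ω ↦ Y ω j] * cov[fun ω ↦ W ω i, fun ω ↦ W ω j; μ]) := by
  have hYW : ∀ i, (fun ω ↦ Y ω i) ⟂ᵢ[μ] (fun ω ↦ W ω i) := fun i ↦
    hind.comp ((measurable_pi_apply i).comp measurable_fst) (measurable_pi_apply i)
  have hterm : ∀ i, MemLp (fun ω ↦ Y ω i * W ω i) 2 μ := fun i ↦
    (hYW i).memLp_two_mul (hY i) (hW i)
  have hcross : ∀ i, cov[B, fun ω ↦ Y ω i * W ω i; μ]
      = cov[B, fun ω ↦ Y ω i; μ] * μ[fun ω ↦ W ω i] := fun i ↦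
    covariance_mul_right_of_indepFun
      (hind.comp (measurable_snd.prodMk ((measurable_pi_apply i).comp measurable_fst))
        (measurable_pi_apply i)) hB (hY i) (hW i)
  have hprod : ∀ i j, cov[fun ω ↦ Y ω i * W ω i, fun ω ↦ Y ω j * W ω j; μ]
      = cov[fun ω ↦ Y ω i, fun ω ↦ Y ω j; μ] * μ[fun ω ↦ W ω i * W ω j]
        + μ[fun ω ↦ Y ω i] * μ[fun ω ↦ Y ω j] * cov[fun ω ↦ W ω i, fun ω ↦ W ω j; μ] :=
    fun i j ↦ covariance_mul_mul_of_indepFun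
      (hind.comp (((measurable_pi_apply i).comp measurable_fst).prodMk
          ((measurable_pi_apply j).comp measurable_fst))
        ((measurable_pi_apply i).prodMk (measurable_pi_apply j)))
      (hY i) (hY j) (hW i) (hW j)
  simp only [dotProduct]
  rw [variance_fun_add hB (memLp_finsetSum _ fun i _ ↦ hterm i),
    covariance_fun_sum_right hterm hB, variance_fun_sum hterm]
  simp only [hcross, hprod]

end ProbabilityTheory

lemma pVar_eq_variance {Ω : Type*} [MeasureSpace Ω] {U : Ω → ℝ} (hU : AEMeasurable U ℙ) :
    pVar U = Var[U] :=
  covariance_self hU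

theorem mean_variance_of_random_linear_predictor_general {Ω : Type*} [MeasureSpace Ω]
    [IsProbabilityMeasure (ℙ : Measure Ω)] {p : ℕ}
    (A : Ω → Fin p → ℝ) (B : Ω → ℝ) (W : Ω → Fin p → ℝ)
    (hA : ∀ j, MemLp (fun ω => A ω j) 2 ℙ) (hB : MemLp B 2 ℙ)
    (hW : ∀ j, MemLp (fun ω => W ω j) 2 ℙ)
    (hindep : IndepFun (fun ω => (A ω, B ω)) W ℙ)
    (μA : Fin p → ℝ) (hμA : μA = fun j => pMean (fun ω => A ω j))
    (μB : ℝ) (hμB : μB = pMean B)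
    (SigA : Matrix (Fin p) (Fin p) ℝ)
    (hSigA : SigA = Matrix.of fun j l => pCov (fun ω => A ω j) (fun ω => A ω l))
    (c : Fin p → ℝ) (hc : c = fun j => pCov (fun ω => A ω j) B)
    (EW : Fin p → ℝ) (hEW : EW = fun j => pMean (fun ω => W ω j))
    (EWWT : Matrix (Fin p) (Fin p) ℝ)
    (hEWWT : EWWT = Matrix.of fun j l => pMean (fun ω => W ω j * W ω l))
    (CovW : Matrix (Fin p) (Fin p) ℝ) (hCovW : CovW = EWWT - vecMulVec EW EW)
    (x₀ : Fin p → ℝ) :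
    pMean (fun ω => B ω + (x₀ - A ω) ⬝ᵥ W ω) = μB + (x₀ - μA) ⬝ᵥ EW ∧
    pVar (fun ω => B ω + (x₀ - A ω) ⬝ᵥ W ω)
      = (x₀ - μA) ⬝ᵥ (CovW *ᵥ (x₀ - μA)) + pVar B
        + Matrix.trace (SigA * EWWT) - 2 * (c ⬝ᵥ EW) := by
  have hAi : ∀ j, Integrable (fun ω => A ω j) ℙ := fun j => (hA j).integrable one_le_two
  have hY : ∀ j, MemLp (fun ω => (x₀ - A ω) j) 2 ℙ := fun j => (memLp_const (x₀ j)).sub (hA j)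
  have hind : (fun ω => (x₀ - A ω, B ω)) ⟂ᵢ[ℙ] W :=
    hindep.comp (φ := fun q => (x₀ - q.1, q.2)) (by fun_prop) measurable_id
  have hmeanY : ∀ j, ∫ ω, (x₀ - A ω) j = (x₀ - μA) j := fun j => by
    simp [hμA, pMean, integral_sub, hAi j]
  have hmeanW : ∀ j, ∫ ω, W ω j = EW j := fun j => by rw [hEW]; rfl
  have hmeanWW : ∀ j l, ∫ ω, W ω j * W ω l = EWWT j l := fun j l => by rw [hEWWT]; rfl
  have hcovBY : ∀ j, cov[B, fun ω => (x₀ - A ω) j] = -c j := fun j => by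
    rw [covariance_comm, hc]
    exact covariance_const_sub_left (hAi j) _
  have hcovYY : ∀ j l, cov[fun ω => (x₀ - A ω) j, fun ω => (x₀ - A ω) l] = SigA j l :=
    fun j l => by rw [hSigA]; exact covariance_const_sub_const_sub (hAi j) (hAi l) _ _
  have hcovW : ∀ j l, cov[fun ω => W ω j, fun ω => W ω l] = CovW j l := fun j l => by
    rw [covariance_eq_sub (hW j) (hW l), hCovW]
    exact congr_arg₂ _ (hmeanWW j l) (congr_arg₂ _ (hmeanW j) (hmeanW l))
  have hEWWT_symm : EWWT.IsSymm := by
    ext j l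
    simp [hEWWT, mul_comm]
  constructor
  · have hindY : (fun ω => x₀ - A ω) ⟂ᵢ[ℙ] W := hind.comp measurable_fst measurable_id
    refine (integral_add_dotProduct_of_indepFun hindY
      (hB.integrable one_le_two) (fun j => (hY j).integrable one_le_two)
      (fun j => (hW j).integrable one_le_two)).trans ?_
    simp only [hmeanY, hmeanW, hμB]
    rfl
  · have hLm : AEMeasurable (fun ω => B ω + (x₀ - A ω) ⬝ᵥ W ω) ℙ :=
      hB.aemeasurable.add (Finset.aemeasurable_fun_sum _ fun j _ =>
        (hY j).aemeasurable.mul (hW j).aemeasurable)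
    rw [pVar_eq_variance hLm, variance_add_dotProduct_of_indepFun hind hB hY hW,
      ← pVar_eq_variance hB.aemeasurable,
      Matrix.trace_mul_eq_sum_sum_of_isSymm hEWWT_symm, Matrix.dotProduct_mulVec_eq_sum_sum]
    simp only [hcovBY, hcovYY, hcovW, hmeanY, hmeanW, hmeanWW, dotProduct,
      Finset.sum_add_distrib, neg_mul, Finset.sum_neg_distrib]
    ring

/-- Mean–variance decomposition for `L = B + (x₀ − A)·W` when the
random slope `W` is independent of the pair `(A, B)`:
`E[L] = μ_B + (x₀−μ_A)·E[W]` and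
`Var[L] = (x₀−μ_A)·Cov(W)·(x₀−μ_A)ᵀ + σ_B² + tr(Σ_A E[WWᵀ]) − 2 cᵀE[W]`. -/
theorem mean_variance_of_random_linear_predictor {Ω : Type*} [MeasureSpace Ω]
    [IsProbabilityMeasure (ℙ : Measure Ω)] {p : ℕ} (hp : 0 < p)
    (A : Ω → Fin p → ℝ) (B : Ω → ℝ) (W : Ω → Fin p → ℝ)
    (hA : ∀ j, MemLp (fun ω => A ω j) 2 ℙ) (hB : MemLp B 2 ℙ)
    (hW : ∀ j, MemLp (fun ω => W ω j) 2 ℙ)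
    (hindep : IndepFun (fun ω => (A ω, B ω)) W ℙ)
    (μA : Fin p → ℝ) (hμA : μA = fun j => pMean (fun ω => A ω j))
    (μB : ℝ) (hμB : μB = pMean B)
    (SigA : Matrix (Fin p) (Fin p) ℝ)
    (hSigA : SigA = Matrix.of fun j l => pCov (fun ω => A ω j) (fun ω => A ω l))
    (c : Fin p → ℝ) (hc : c = fun j => pCov (fun ω => A ω j) B)
    (EW : Fin p → ℝ) (hEW : EW = fun j => pMean (fun ω => W ω j))
    (EWWT : Matrix (Fin p) (Fin p) ℝ)
    (hEWWT : EWWT = Matrix.of fun j l => pMean (fun ω => W ω j * W ω l))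
    (CovW : Matrix (Fin p) (Fin p) ℝ) (hCovW : CovW = EWWT - vecMulVec EW EW)
    (x₀ : Fin p → ℝ) :
    pMean (fun ω => B ω + (x₀ - A ω) ⬝ᵥ W ω) = μB + (x₀ - μA) ⬝ᵥ EW ∧
    pVar (fun ω => B ω + (x₀ - A ω) ⬝ᵥ W ω)
      = (x₀ - μA) ⬝ᵥ (CovW *ᵥ (x₀ - μA)) + pVar B
        + Matrix.trace (SigA * EWWT) - 2 * (c ⬝ᵥ EW) :=
  mean_variance_of_random_linear_predictor_general A B W hA hB hW hindep μA hμA μB hμB SigA hSigA c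
    hc EW hEW EWWT hEWWT CovW hCovW x₀
end
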